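/- For ε > 0, let P_ε ⊂ ℝ³ be the convex hull of the fourteen points ±(1/4, 0, 0), ±(0, 1/4, 0), ±(0, 0, ε), ±(1/6, 1/6, 1/6), ±(1/6, 1/6, −1/6), ±(1/6, −1/6, 1/6), ±(1/6, −1/6, −1/6). There exist infinitely many values of ε in the open interval (1/6, 1/4) for which there is no finite family of vectors β₁, …, β_k ∈ ℝ³ such that P_ε = {v ∈ ℝ³ : Σ_{i=1}^k |⟨β_i, v⟩| ≤ 1}. -/

import Mathlib

/-!
Hlawka's inequality `|a+b| + |b+c| + |c+a| ≤ |a| + |b| + |c| + |a+b+c|` holds on `ℝ`, hence for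
every norm of the form `N v = ∑ i, |⟪βᵢ, v⟫|`. Three vertices of the inner cube `[-1/6, 1/6]³`
of `P_ε` have pairwise sums `eᵢ/3` and total sum a fourth cube vertex, so such an `N` with unit
ball `P_ε` would satisfy `N(e₁/3) + N(e₂/3) + N(e₃/3) ≤ 4`. But the facets `x = 1/4`, `y = 1/4`,
`z = ε` of `P_ε` give `N(e₁/3), N(e₂/3) ≥ 4/3` and `N(e₃/3) ≥ 1/(3ε) > 4/3` once `ε < 1/4`.
So every `ε ∈ (1/6, 1/4)` works.
-/

open Set
open scoped RealInnerProductSpace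

theorem abs_hlawka (a b c : ℝ) :
    |a + b| + |b + c| + |c + a| ≤ |a| + |b| + |c| + |a + b + c| := by
  rcases abs_cases (a + b) with ⟨h₁, _⟩ | ⟨h₁, _⟩ <;>
  rcases abs_cases (b + c) with ⟨h₂, _⟩ | ⟨h₂, _⟩ <;>
  rcases abs_cases (c + a) with ⟨h₃, _⟩ | ⟨h₃, _⟩ <;>
  rcases abs_cases (a + b + c) with ⟨h₄, _⟩ | ⟨h₄, _⟩ <;>
  rcases abs_cases a with ⟨h₅, _⟩ | ⟨h₅, _⟩ <;>
  rcases abs_cases b with ⟨h₆, _⟩ | ⟨h₆, _⟩ <;>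
  rcases abs_cases c with ⟨h₇, _⟩ | ⟨h₇, _⟩ <;>
  linarith

section SumAbsInner

variable {ι E : Type*} [Fintype ι] [NormedAddCommGroup E] [InnerProductSpace ℝ E]

def sumAbsInner (β : ι → E) (v : E) : ℝ := ∑ i, |⟪β i, v⟫|

theorem sumAbsInner_nonneg (β : ι → E) (v : E) : 0 ≤ sumAbsInner β v :=
  Finset.sum_nonneg fun _ _ => abs_nonneg _

theorem sumAbsInner_smul (β : ι → E) (c : ℝ) (v : E) :
    sumAbsInner β (c • v) = |c| * sumAbsInner β v := by
  simp only [sumAbsInner, real_inner_smul_right, abs_mul, Finset.mul_sum]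

theorem sumAbsInner_hlawka (β : ι → E) (a b c : E) :
    sumAbsInner β (a + b) + sumAbsInner β (b + c) + sumAbsInner β (c + a) ≤
      sumAbsInner β a + sumAbsInner β b + sumAbsInner β c + sumAbsInner β (a + b + c) := by
  simp only [sumAbsInner, ← Finset.sum_add_distrib]
  refine Finset.sum_le_sum fun i _ => ?_
  simp only [inner_add_right]
  exact abs_hlawka _ _ _

/-- `sumAbsInner β` is positively homogeneous, hence the gauge of its unit ball `convexHull ℝ S`. -/
theorem inner_le_sumAbsInner_of_convexHull_eq {S : Set E} {β : ι → E}
    (h : convexHull ℝ S = {v | sumAbsInner β v ≤ 1}) {u : E} (hu : ∀ p ∈ S, ⟪u, p⟫ ≤ 1)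
    (v : E) : ⟪u, v⟫ ≤ sumAbsInner β v := by
  have hS : convexHull ℝ S ⊆ {x | ⟪u, x⟫ ≤ 1} :=
    convexHull_min hu (convex_halfSpace_le (innerₗ E u).isLinear 1)
  refine le_of_forall_gt_imp_ge_of_dense fun t ht => ?_
  have ht₀ : 0 < t := (sumAbsInner_nonneg β v).trans_lt ht
  have hmem : t⁻¹ • v ∈ convexHull ℝ S := by
    rw [h, mem_ofPred_eq, sumAbsInner_smul, abs_of_pos (inv_pos.2 ht₀), inv_mul_le_iff₀ ht₀,
      mul_one]
    exact ht.le
  have hle := hS hmem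
  rwa [mem_ofPred_eq, real_inner_smul_right, inv_mul_le_iff₀ ht₀, mul_one] at hle

end SumAbsInner

theorem div_le_sumAbsInner_single {n k : ℕ} {S : Set (EuclideanSpace ℝ (Fin n))}
    {β : Fin k → EuclideanSpace ℝ (Fin n)} (h : convexHull ℝ S = {v | sumAbsInner β v ≤ 1})
    {i : Fin n} {r : ℝ} (hr : 0 < r) (hS : ∀ p ∈ S, |p i| ≤ r) (t : ℝ) :
    t / r ≤ sumAbsInner β (EuclideanSpace.single i t) := by
  refine le_of_eq_of_le ?_ (inner_le_sumAbsInner_of_convexHull_eq h (u := .single i r⁻¹)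
    (fun p hp => ?_) _)
  · simp [EuclideanSpace.inner_single_left, div_eq_inv_mul]
  · rw [EuclideanSpace.inner_single_left, conj_trivial, inv_mul_le_one₀ hr]
    exact (le_abs_self _).trans (hS p hp)

def polytopeVertices (ε : ℝ) : Set (EuclideanSpace ℝ (Fin 3)) :=
  {!₂[1/4, 0, 0], -!₂[1/4, 0, 0], !₂[0, 1/4, 0], -!₂[0, 1/4, 0], !₂[0, 0, ε], -!₂[0, 0, ε],
    !₂[1/6, 1/6, 1/6], -!₂[1/6, 1/6, 1/6], !₂[1/6, 1/6, -(1/6)], -!₂[1/6, 1/6, -(1/6)],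
    !₂[1/6, -(1/6), 1/6], -!₂[1/6, -(1/6), 1/6], !₂[1/6, -(1/6), -(1/6)],
    -!₂[1/6, -(1/6), -(1/6)]}

theorem abs_apply_le_of_mem_polytopeVertices {ε : ℝ} (hε : 1/6 ≤ ε) {p : EuclideanSpace ℝ (Fin 3)}
    (hp : p ∈ polytopeVertices ε) : |p 0| ≤ 1/4 ∧ |p 1| ≤ 1/4 ∧ |p 2| ≤ ε := by
  have hε₀ : 0 ≤ ε := by linarith
  simp only [polytopeVertices, mem_insert_iff, mem_singleton_iff] at hp
  rcases hp with rfl | rfl | rfl | rfl | rfl | rfl | rfl | rfl | rfl | rfl | rfl | rfl | rfl | rfl <;>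
    simp <;> norm_num [abs_of_nonneg hε₀, hε, hε₀]

/-- Hlawka's inequality for the cube vertices `a = -(1,-1,-1)/6`, `b = (1,-1,1)/6`,
`c = (1,1,-1)/6`, whose pairwise sums are `e₃/3, e₁/3, e₂/3` and whose total is `(1,1,1)/6`. -/
theorem sumAbsInner_single_third_le {k : ℕ} (β : Fin k → EuclideanSpace ℝ (Fin 3)) :
    sumAbsInner β (.single 0 (1/3)) + sumAbsInner β (.single 1 (1/3)) +
        sumAbsInner β (.single 2 (1/3)) ≤
      sumAbsInner β (-!₂[1/6, -(1/6), -(1/6)]) + sumAbsInner β !₂[1/6, -(1/6), 1/6] +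
        sumAbsInner β !₂[1/6, 1/6, -(1/6)] + sumAbsInner β !₂[1/6, 1/6, 1/6] := by
  have hab : -!₂[1/6, -(1/6), -(1/6)] + !₂[1/6, -(1/6), 1/6] =
      EuclideanSpace.single (2 : Fin 3) (1/3 : ℝ) := by
    ext i; fin_cases i <;> norm_num [Fin.ext_iff]
  have hbc : !₂[1/6, -(1/6), 1/6] + !₂[1/6, 1/6, -(1/6)] =
      EuclideanSpace.single (0 : Fin 3) (1/3 : ℝ) := by
    ext i; fin_cases i <;> norm_num [Fin.ext_iff]
  have hca : !₂[1/6, 1/6, -(1/6)] + -!₂[1/6, -(1/6), -(1/6)] =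
      EuclideanSpace.single (1 : Fin 3) (1/3 : ℝ) := by
    ext i; fin_cases i <;> norm_num [Fin.ext_iff]
  have habc : -!₂[1/6, -(1/6), -(1/6)] + !₂[1/6, -(1/6), 1/6] + !₂[1/6, 1/6, -(1/6)] =
      (!₂[1/6, 1/6, 1/6] : EuclideanSpace ℝ (Fin 3)) := by
    ext i; fin_cases i <;> norm_num
  have hcube := sumAbsInner_hlawka β (-!₂[1/6, -(1/6), -(1/6)]) !₂[1/6, -(1/6), 1/6]
    !₂[1/6, 1/6, -(1/6)]
  rw [habc, hab, hbc, hca] at hcube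
  linarith

theorem convexHull_polytopeVertices_ne {ε : ℝ} (hε : ε ∈ Ioo (1/6 : ℝ) (1/4)) {k : ℕ}
    (β : Fin k → EuclideanSpace ℝ (Fin 3)) :
    convexHull ℝ (polytopeVertices ε) ≠ {v | sumAbsInner β v ≤ 1} := by
  intro h
  have hε₀ : 0 < ε := by linarith [hε.1]
  have hvert : ∀ p ∈ polytopeVertices ε, sumAbsInner β p ≤ 1 := fun p hp =>
    h.subset (subset_convexHull ℝ _ hp)
  have hcoord := fun p hp => abs_apply_le_of_mem_polytopeVertices hε.1.le (p := p) hp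
  have hx := div_le_sumAbsInner_single h (i := 0) (by norm_num) (fun p hp => (hcoord p hp).1) (1/3)
  have hy := div_le_sumAbsInner_single h (i := 1) (by norm_num)
    (fun p hp => (hcoord p hp).2.1) (1/3)
  have hz := div_le_sumAbsInner_single h (i := 2) hε₀ (fun p hp => (hcoord p hp).2.2) (1/3)
  have hz' : 4/3 < 1/3/ε := by rw [lt_div_iff₀ hε₀]; linarith [hε.2]
  have h₁ := hvert (-!₂[1/6, -(1/6), -(1/6)]) (by simp [polytopeVertices])
  have h₂ := hvert !₂[1/6, -(1/6), 1/6] (by simp [polytopeVertices])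
  have h₃ := hvert !₂[1/6, 1/6, -(1/6)] (by simp [polytopeVertices])
  have h₄ := hvert !₂[1/6, 1/6, 1/6] (by simp [polytopeVertices])
  norm_num at hx hy
  linarith [sumAbsInner_single_third_le β]

/-- for infinitely many `ε ∈ (1/6, 1/4)`, the convex hull `P_ε` of the
fourteen listed points of `ℝ³` is not the unit ball of any finite sum of absolute
values of linear functionals. -/
theorem infinitely_many_nonrealizable_polyhedra :
    {ε : ℝ | ε ∈ Set.Ioo (1/6 : ℝ) (1/4 : ℝ) ∧
      ¬ ∃ (k : ℕ) (β : Fin k → EuclideanSpace ℝ (Fin 3)),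
          convexHull ℝ
            ({(!₂[1/4, 0, 0] : EuclideanSpace ℝ (Fin 3)),
              -(!₂[1/4, 0, 0] : EuclideanSpace ℝ (Fin 3)),
              (!₂[0, 1/4, 0] : EuclideanSpace ℝ (Fin 3)),
              -(!₂[0, 1/4, 0] : EuclideanSpace ℝ (Fin 3)),
              (!₂[0, 0, ε] : EuclideanSpace ℝ (Fin 3)),
              -(!₂[0, 0, ε] : EuclideanSpace ℝ (Fin 3)),
              (!₂[1/6, 1/6, 1/6] : EuclideanSpace ℝ (Fin 3)),
              -(!₂[1/6, 1/6, 1/6] : EuclideanSpace ℝ (Fin 3)),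
              (!₂[1/6, 1/6, -(1/6)] : EuclideanSpace ℝ (Fin 3)),
              -(!₂[1/6, 1/6, -(1/6)] : EuclideanSpace ℝ (Fin 3)),
              (!₂[1/6, -(1/6), 1/6] : EuclideanSpace ℝ (Fin 3)),
              -(!₂[1/6, -(1/6), 1/6] : EuclideanSpace ℝ (Fin 3)),
              (!₂[1/6, -(1/6), -(1/6)] : EuclideanSpace ℝ (Fin 3)),
              -(!₂[1/6, -(1/6), -(1/6)] : EuclideanSpace ℝ (Fin 3))} :
                Set (EuclideanSpace ℝ (Fin 3))) =
            {v : EuclideanSpace ℝ (Fin 3) |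
              ∑ i, |(inner ℝ (β i) v : ℝ)| ≤ 1}}.Infinite :=
  (Ioo_infinite (by norm_num : (1/6 : ℝ) < 1/4)).mono fun _ hε =>
    ⟨hε, fun ⟨_, β, h⟩ => convexHull_polytopeVertices_ne hε β h⟩
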